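/- For points x, y on the unit hyperboloid with space-part norms ‖x‖, ‖y‖ ≥ 1 and angle θ with cos θ < 1, the absolute approximation error satisfies |z - z_approx| ≤ ‖y‖/(2‖x‖) + ‖x‖/(2‖y‖) + 1/(4‖x‖‖y‖), where z = √(1+‖x‖²)√(1+‖y‖²) - ‖x‖‖y‖cos θ and z_approx = ‖x‖‖y‖(1 - cos θ). -/
import Mathlib

/-- Absolute approximation error bound: |z - z_approx| ≤ b/(2a) + a/(2b) + 1/(4ab). -/
theorem stmt_9 (a b c : ℝ) (ha : 1 ≤ a) (hb : 1 ≤ b) (hc1 : -1 ≤ c) (hc2 : c < 1)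
    (z zapprox : ℝ)
    (hz : z = Real.sqrt (1 + a ^ 2) * Real.sqrt (1 + b ^ 2) - a * b * c)
    (hza : zapprox = a * b * (1 - c)) :
    |z - zapprox| ≤ b / (2 * a) + a / (2 * b) + 1 / (4 * a * b) := by
  have ha0 : (0:ℝ) < a := by linarith
  have hb0 : (0:ℝ) < b := by linarith
  set s := Real.sqrt (1 + a ^ 2) with hs
  set t := Real.sqrt (1 + b ^ 2) with ht
  have hs2 : s ^ 2 = 1 + a ^ 2 := Real.sq_sqrt (by positivity)
  have ht2 : t ^ 2 = 1 + b ^ 2 := Real.sq_sqrt (by positivity)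
  have hs0 : 0 ≤ s := Real.sqrt_nonneg _
  have ht0 : 0 ≤ t := Real.sqrt_nonneg _
  have hsa : a ≤ s := by nlinarith
  have htb : b ≤ t := by nlinarith
  have hsu : s ≤ a + 1 / (2 * a) := by
    have h : (1 + a ^ 2) ≤ (a + 1 / (2 * a)) ^ 2 := by
      have : (a + 1 / (2 * a)) ^ 2 = 1 + a ^ 2 + 1 / (4 * a ^ 2) := by field_simp; ring
      rw [this]; have : (0:ℝ) < 1 / (4 * a ^ 2) := by positivity
      linarith
    exact (Real.sqrt_le_sqrt h).trans_eq (Real.sqrt_sq (by positivity))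
  have htu : t ≤ b + 1 / (2 * b) := by
    have h : (1 + b ^ 2) ≤ (b + 1 / (2 * b)) ^ 2 := by
      have : (b + 1 / (2 * b)) ^ 2 = 1 + b ^ 2 + 1 / (4 * b ^ 2) := by field_simp; ring
      rw [this]; have : (0:ℝ) < 1 / (4 * b ^ 2) := by positivity
      linarith
    exact (Real.sqrt_le_sqrt h).trans_eq (Real.sqrt_sq (by positivity))
  have key : z - zapprox = s * t - a * b := by rw [hz, hza]; ring
  rw [key, abs_of_nonneg (by nlinarith)]
  have h1 : s * t ≤ (a + 1/(2*a)) * (b + 1/(2*b)) :=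
    mul_le_mul hsu htu ht0 (by positivity)
  have h2 : (a + 1/(2*a)) * (b + 1/(2*b)) - a*b = b/(2*a) + a/(2*b) + 1/(4*a*b) := by
    field_simp; ring
  linarith
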